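/- Let ≻ be a strict total consistent order on k-subsets of [n], and let a ≻ b ≻ c be players. If (S,T) is a subset-team witness for b ≻ c (i.e., S a (k-1)-subset, T a k-subset, both in [n]\{b,c}, disjoint, with S∪{b} ≻ T ≻ S∪{c}), then either (π(S), π(T)) is a subset-team witness for a ≻ c, or (in case a ∈ T) (S, T\{a}) is a subsets witness for a ≻ c. -/

import Mathlib

/-- The permutation on subsets exchanging players `a` and `b`. -/
def swapSet {n : ℕ} (a b : Fin n) (A : Finset (Fin n)) : Finset (Fin n) :=
  if a ∈ A ∧ b ∉ A then insert b (A.erase a)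
  else if b ∈ A ∧ a ∉ A then insert a (A.erase b)
  else A

/-!
If `a` beats `b` and `b` beats `c` in single-player exchanges, then so does `a` against `c`:
otherwise consistency makes `c` beat `a`, and one `(k-1)`-set avoiding `a, b, c` (it exists as
`2k ≤ n`) gives a cycle `a ≻ b ≻ c ≻ a`. Now take `insert b S ≻ T ≻ insert c S`.
If `a ∈ T`, then `insert a S ≻ insert b S ≻ T ≻ insert c (T.erase a)` and
`insert a (T.erase a) = T ≻ insert c S`. If `a ∈ S`, then `insert a (π S) = insert b S`, and
`insert c S ≻ insert c (π S)` is an exchange of `a` for `b`. Otherwise `π` fixes `S` and `T`.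
-/

open Finset

theorem swapSet_of_notMem_of_notMem {n : ℕ} {a b : Fin n} {A : Finset (Fin n)}
    (ha : a ∉ A) (hb : b ∉ A) : swapSet a b A = A := by
  simp [swapSet, ha, hb]

theorem swapSet_of_mem_of_notMem {n : ℕ} {a b : Fin n} {A : Finset (Fin n)}
    (ha : a ∈ A) (hb : b ∉ A) : swapSet a b A = insert b (A.erase a) := by
  simp [swapSet, ha, hb]

theorem Finset.exists_card_eq_disjoint {α : Type*} [Fintype α] [DecidableEq α]
    (s : Finset α) {m : ℕ} (h : m + #s ≤ Fintype.card α) :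
    ∃ R : Finset α, #R = m ∧ Disjoint R s := by
  obtain ⟨R, hRs, hR⟩ := exists_subset_card_eq (s := sᶜ) (n := m) (by rw [card_compl]; omega)
  exact ⟨R, hR, disjoint_of_subset_left hRs disjoint_compl_left⟩

section Witnesses

variable {α : Type*} [DecidableEq α] {succ : Finset α → Finset α → Prop} {k : ℕ}

def Dominates (succ : Finset α → Finset α → Prop) (k : ℕ) (x y : α) : Prop :=
  ∀ S : Finset α, #S = k - 1 → x ∉ S → y ∉ S → succ (insert x S) (insert y S)

def IsSubsetsWitness (succ : Finset α → Finset α → Prop) (k : ℕ) (x y : α)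
    (P P' : Finset α) : Prop :=
  #P = k - 1 ∧ #P' = k - 1 ∧ x ∉ P ∧ y ∉ P ∧ x ∉ P' ∧ y ∉ P' ∧ Disjoint P P' ∧
    succ (insert x P) (insert y P') ∧ succ (insert x P') (insert y P)

def IsSubsetTeamWitness (succ : Finset α → Finset α → Prop) (k : ℕ) (x y : α)
    (S T : Finset α) : Prop :=
  #S = k - 1 ∧ #T = k ∧ x ∉ S ∧ y ∉ S ∧ x ∉ T ∧ y ∉ T ∧ Disjoint S T ∧
    succ (insert x S) T ∧ succ T (insert y S)

theorem Dominates.not_dominates [IsTrans _ succ] [Std.Asymm succ] {a b c : α}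
    (hab : Dominates succ k a b) (hbc : Dominates succ k b c) {R : Finset α} (hR : #R = k - 1)
    (haR : a ∉ R) (hbR : b ∉ R) (hcR : c ∉ R) : ¬ Dominates succ k c a := fun hca =>
  asymm (_root_.trans (hab R hR haR hbR) (hbc R hR hbR hcR)) (hca R hR hcR haR)

variable [IsTrans _ succ] {a b c : α} {S T : Finset α}

theorem IsSubsetTeamWitness.of_dominates_of_notMem (hw : IsSubsetTeamWitness succ k b c S T)
    (hab : Dominates succ k a b) (haS : a ∉ S) (haT : a ∉ T) :
    IsSubsetTeamWitness succ k a c S T := by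
  obtain ⟨hS, hT, hbS, hcS, -, hcT, hdisj, hw1, hw2⟩ := hw
  exact ⟨hS, hT, haS, hcS, haT, hcT, hdisj, _root_.trans (hab S hS haS hbS) hw1, hw2⟩

theorem IsSubsetTeamWitness.of_dominates_of_mem (hw : IsSubsetTeamWitness succ k b c S T)
    (hdom : Dominates succ k a b) (hab : a ≠ b) (hac : a ≠ c) (hbc : b ≠ c) (haS : a ∈ S)
    (haT : a ∉ T) : IsSubsetTeamWitness succ k a c (insert b (S.erase a)) T := by
  obtain ⟨hS, hT, hbS, hcS, hbT, hcT, hdisj, hw1, hw2⟩ := hw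
  have hbE : b ∉ S.erase a := fun h => hbS (mem_of_mem_erase h)
  have hcE : c ∉ S.erase a := fun h => hcS (mem_of_mem_erase h)
  have hk : 1 ≤ k - 1 := hS ▸ card_pos.mpr ⟨a, haS⟩
  have hcard : #(insert c (S.erase a)) = k - 1 := by
    rw [card_insert_of_notMem hcE, card_erase_of_mem haS, hS]; omega
  have hlower : succ (insert c S) (insert c (insert b (S.erase a))) := by
    have h := hdom _ hcard (by simp [hac]) (by simp [hbc, hbE])
    rwa [insert_comm, insert_erase haS, insert_comm b] at h
  refine ⟨?_, hT, by simp [hab], by simp [hbc.symm, hcE], haT, hcT,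
    disjoint_insert_left.mpr ⟨hbT, hdisj.mono_left (erase_subset _ _)⟩, ?_,
    _root_.trans hw2 hlower⟩
  · rw [card_insert_of_notMem hbE, card_erase_of_mem haS, hS]; omega
  · rwa [insert_comm, insert_erase haS]

theorem IsSubsetTeamWitness.isSubsetsWitness_erase (hw : IsSubsetTeamWitness succ k b c S T)
    (hab : Dominates succ k a b) (hac : Dominates succ k a c) (haT : a ∈ T) :
    IsSubsetsWitness succ k a c S (T.erase a) := by
  obtain ⟨hS, hT, hbS, hcS, -, hcT, hdisj, hw1, hw2⟩ := hw
  have haS : a ∉ S := disjoint_right.mp hdisj haT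
  have hcE : c ∉ T.erase a := fun h => hcT (mem_of_mem_erase h)
  have hcard : #(T.erase a) = k - 1 := by rw [card_erase_of_mem haT, hT]
  have hupper := hac _ hcard (notMem_erase a T) hcE
  rw [insert_erase haT] at hupper
  refine ⟨hS, hcard, haS, hcS, notMem_erase a T, hcE, hdisj.mono_right (erase_subset _ _),
    _root_.trans (_root_.trans (hab S hS haS hbS) hw1) hupper, ?_⟩
  rwa [insert_erase haT]

end Witnesses

theorem IsSubsetTeamWitness.swapSet_or_isSubsetsWitness_erase {n k : ℕ}
    {succ : Finset (Fin n) → Finset (Fin n) → Prop} [IsTrans _ succ] {a b c : Fin n}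
    {S T : Finset (Fin n)} (hw : IsSubsetTeamWitness succ k b c S T) (hab : a ≠ b)
    (hac : a ≠ c) (hbc : b ≠ c) (hdab : Dominates succ k a b) (hdac : Dominates succ k a c) :
    IsSubsetTeamWitness succ k a c (swapSet a b S) (swapSet a b T) ∨
      (a ∈ T ∧ IsSubsetsWitness succ k a c S (T.erase a)) := by
  have ⟨_, _, hbS, _, hbT, _⟩ := hw
  by_cases haT : a ∈ T
  · exact .inr ⟨haT, hw.isSubsetsWitness_erase hdab hdac haT⟩
  rw [swapSet_of_notMem_of_notMem haT hbT]
  by_cases haS : a ∈ S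
  · rw [swapSet_of_mem_of_notMem haS hbS]
    exact .inl (hw.of_dominates_of_mem hdab hab hac hbc haS haT)
  · rw [swapSet_of_notMem_of_notMem haS hbS]
    exact .inl (hw.of_dominates_of_notMem hdab haS haT)

theorem stmt5_general (n k : ℕ) (hkn : 2*k ≤ n)
    (succ : Finset (Fin n) → Finset (Fin n) → Prop)
    (htrans : ∀ A B C, succ A B → succ B C → succ A C)
    (hasym : ∀ A B, succ A B → ¬ succ B A)
    (hcons : ∀ x y : Fin n, x ≠ y →
      (∀ S : Finset (Fin n), S.card = k-1 → x ∉ S → y ∉ S → succ (insert x S) (insert y S)) ∨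
      (∀ S : Finset (Fin n), S.card = k-1 → x ∉ S → y ∉ S → succ (insert y S) (insert x S)))
    (a b c : Fin n) (hab : a ≠ b) (hbc : b ≠ c) (hac : a ≠ c)
    (hdomab : ∀ S : Finset (Fin n), S.card = k-1 → a ∉ S → b ∉ S →
      succ (insert a S) (insert b S))
    (hdombc : ∀ S : Finset (Fin n), S.card = k-1 → b ∉ S → c ∉ S →
      succ (insert b S) (insert c S))
    (S T : Finset (Fin n))
    (hS : S.card = k-1) (hT : T.card = k)
    (hbS : b ∉ S) (hcS : c ∉ S) (hbT : b ∉ T) (hcT : c ∉ T)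
    (hdisj : Disjoint S T)
    (hw1 : succ (insert b S) T)
    (hw2 : succ T (insert c S)) :
    ((swapSet a b S).card = k-1 ∧ (swapSet a b T).card = k ∧
      a ∉ swapSet a b S ∧ c ∉ swapSet a b S ∧
      a ∉ swapSet a b T ∧ c ∉ swapSet a b T ∧
      Disjoint (swapSet a b S) (swapSet a b T) ∧
      succ (insert a (swapSet a b S)) (swapSet a b T) ∧
      succ (swapSet a b T) (insert c (swapSet a b S))) ∨
    (a ∈ T ∧
      S.card = k-1 ∧ (T.erase a).card = k-1 ∧
      a ∉ S ∧ c ∉ S ∧ a ∉ T.erase a ∧ c ∉ T.erase a ∧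
      Disjoint S (T.erase a) ∧
      succ (insert a S) (insert c (T.erase a)) ∧
      succ (insert a (T.erase a)) (insert c S)) := by
  have : IsTrans _ succ := ⟨htrans⟩
  have : Std.Asymm succ := ⟨hasym⟩
  obtain ⟨R, hR, hRabc⟩ := exists_card_eq_disjoint {a, b, c} (m := k - 1) (by
    have h3 : #{a, b, c} ≤ 3 := card_le_three
    have hn : #{a, b, c} ≤ n := card_le_univ {a, b, c} |>.trans_eq (Fintype.card_fin n)
    rw [Fintype.card_fin]
    omega)
  have hdac : Dominates succ k a c := (hcons a c hac).resolve_right fun hdca =>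
    Dominates.not_dominates hdomab hdombc hR (disjoint_right.mp hRabc (by simp))
      (disjoint_right.mp hRabc (by simp)) (disjoint_right.mp hRabc (by simp))
      fun S hS hcS haS => hdca S hS haS hcS
  exact IsSubsetTeamWitness.swapSet_or_isSubsetsWitness_erase
    ⟨hS, hT, hbS, hcS, hbT, hcT, hdisj, hw1, hw2⟩ hab hac hbc hdomab hdac

/-- if a ≻ b ≻ c and (S,T) is a subset-team witness for b ≻ c, then
either (π(S),π(T)) is a subset-team witness for a ≻ c, or (when a ∈ T)
(S, T\{a}) is a subsets witness for a ≻ c. -/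
theorem stmt5 (n k : ℕ) (hk : 1 ≤ k) (hkn : 2*k ≤ n)
    (succ : Finset (Fin n) → Finset (Fin n) → Prop)
    (htrans : ∀ A B C, succ A B → succ B C → succ A C)
    (hasym : ∀ A B, succ A B → ¬ succ B A)
    (htotal : ∀ A B : Finset (Fin n), A.card = k → B.card = k → A ≠ B →
      (succ A B ∨ succ B A))
    (hcons : ∀ x y : Fin n, x ≠ y →
      (∀ S : Finset (Fin n), S.card = k-1 → x ∉ S → y ∉ S → succ (insert x S) (insert y S)) ∨
      (∀ S : Finset (Fin n), S.card = k-1 → x ∉ S → y ∉ S → succ (insert y S) (insert x S)))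
    (a b c : Fin n) (hab : a ≠ b) (hbc : b ≠ c) (hac : a ≠ c)
    (hdomab : ∀ S : Finset (Fin n), S.card = k-1 → a ∉ S → b ∉ S →
      succ (insert a S) (insert b S))
    (hdombc : ∀ S : Finset (Fin n), S.card = k-1 → b ∉ S → c ∉ S →
      succ (insert b S) (insert c S))
    (S T : Finset (Fin n))
    (hS : S.card = k-1) (hT : T.card = k)
    (hbS : b ∉ S) (hcS : c ∉ S) (hbT : b ∉ T) (hcT : c ∉ T)
    (hdisj : Disjoint S T)
    (hw1 : succ (insert b S) T)
    (hw2 : succ T (insert c S)) :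
    ((swapSet a b S).card = k-1 ∧ (swapSet a b T).card = k ∧
      a ∉ swapSet a b S ∧ c ∉ swapSet a b S ∧
      a ∉ swapSet a b T ∧ c ∉ swapSet a b T ∧
      Disjoint (swapSet a b S) (swapSet a b T) ∧
      succ (insert a (swapSet a b S)) (swapSet a b T) ∧
      succ (swapSet a b T) (insert c (swapSet a b S))) ∨
    (a ∈ T ∧
      S.card = k-1 ∧ (T.erase a).card = k-1 ∧
      a ∉ S ∧ c ∉ S ∧ a ∉ T.erase a ∧ c ∉ T.erase a ∧
      Disjoint S (T.erase a) ∧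
      succ (insert a S) (insert c (T.erase a)) ∧
      succ (insert a (T.erase a)) (insert c S)) :=
  stmt5_general n k hkn succ htrans hasym hcons a b c hab hbc hac hdomab hdombc S T hS hT hbS hcS
    hbT hcT hdisj hw1 hw2
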